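/- arXiv:q-alg/9605021 — 2 statements merged into one kernel-verified Lean document; each statement's English description precedes it below -/
import Mathlib

section
/- Fix an integer n ≥ 1 and define y_k := (2k+2)! · c_{2k} / (4^k · (2n+1)) for every k ≥ 0. Then y_0 = 2/(2n+1) and, for every k ≥ 1, k · y_k = −Σ_{p=0}^{k−1} y_p · ((2k+2)!/4) / ((2p+2)! · (2k−2p+1)!) · ((2k−2p−1)(2n−2p+1) + 2p(2k−2p+1)). (The same coefficients satisfy both recursion relations arising from the two different reorderings.) -/
/-!
Write `θ = X d/dX`, `f = h⁻¹ ^ m` and `H(u) = h(2u)`. In terms of `e^{±u}` the duplication formula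
`sinh u cosh 2u - cosh u sinh 2u = -sinh u` becomes the first-order relation
`θH·h - 2 θh·H = hH - h`, and since `θf = -m f θh / h` this gives
`m f θH + 2 θf H - m f H + m f = 0`. Its coefficient of `u^{2k}` involves only even coefficients of
the even series `f` and `H`, and is the recursion for `c_{2k}`; the normalisation of `y_k` turns
it into the stated one.
-/

open scoped BigOperators
open Nat

noncomputable section

/-- The formal power series `sinh u = Σ u^{2j+1}/(2j+1)!`. -/
def sinhS : PowerSeries ℚ := PowerSeries.mk fun m => if m % 2 = 1 then (1:ℚ)/(m)! else 0

/-- The formal power series `h = sinh(u)/u = Σ u^{2j}/(2j+1)!` (constant term 1, invertible). -/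
def hS : PowerSeries ℚ := PowerSeries.mk fun m => if m % 2 = 0 then (1:ℚ)/(m+1)! else 0

/-- `c_m`, the coefficient of `u^m` in `(u/sinh u)^{2n+1} = (h⁻¹)^{2n+1}`. -/
def ccoef (n m : ℕ) : ℚ := PowerSeries.coeff (R := ℚ) m ((hS⁻¹)^(2*n+1))

/-- `y_k = (2k+2)! c_{2k} / (4^k (2n+1))`. -/
def ycoef (n k : ℕ) : ℚ := (((2*k+2))! : ℚ) * ccoef n (2*k) / (4^k * (2*(n:ℚ)+1))

open PowerSeries

theorem Derivation.map_ofNat {R A M : Type*} [CommSemiring R] [CommSemiring A] [Algebra R A]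
    [AddCommMonoid M] [Module A M] [Module R M] (D : Derivation R A M) (n : ℕ) [n.AtLeastTwo] :
    D (OfNat.ofNat n) = 0 :=
  D.map_natCast n

namespace PowerSeries

variable (R : Type*) [CommRing R]

def eulerOp : Derivation R R⟦X⟧ R⟦X⟧ := (X : R⟦X⟧) • d⁄dX R

variable {R}

theorem eulerOp_apply (f : R⟦X⟧) : eulerOp R f = X * d⁄dX R f := rfl

theorem coeff_eulerOp (m : ℕ) (f : R⟦X⟧) : coeff m (eulerOp R f) = m * coeff m f := by
  rcases m with _ | m
  · simp [eulerOp_apply]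
  · rw [eulerOp_apply, coeff_succ_X_mul, coeff_derivative, mul_comm, Nat.cast_succ]

theorem eulerOp_X : eulerOp R X = X := by
  simp [eulerOp_apply]

theorem eulerOp_rescale (a : R) (f : R⟦X⟧) : eulerOp R (rescale a f) = rescale a (eulerOp R f) := by
  ext m
  simp only [coeff_eulerOp, coeff_rescale]
  ring

theorem eulerOp_exp [Algebra ℚ R] : eulerOp R (exp R) = X * exp R := by
  rw [eulerOp_apply, derivative_exp]

theorem eulerOp_inv_pow {K : Type*} [Field K] (g : K⟦X⟧) (m : ℕ) :
    eulerOp K (g⁻¹ ^ m) = -(m * g⁻¹ ^ (m + 1) * eulerOp K g) := by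
  rcases m with _ | m
  · simp
  · simp only [eulerOp_apply, Derivation.leibniz_pow, derivative_inv', nsmul_eq_mul, smul_eq_mul]
    push_cast
    ring

theorem constantCoeff_rescale (a : R) (f : R⟦X⟧) :
    constantCoeff (rescale a f) = constantCoeff f := by
  rw [← coeff_zero_eq_constantCoeff_apply, coeff_rescale, pow_zero, one_mul,
    coeff_zero_eq_constantCoeff_apply]

theorem rescale_inv {K : Type*} [Field K] (a : K) (g : K⟦X⟧) :
    rescale a g⁻¹ = (rescale a g)⁻¹ := by
  by_cases hg : constantCoeff g = 0
  · rw [inv_eq_zero.mpr hg, inv_eq_zero.mpr (by rwa [constantCoeff_rescale]), map_zero]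
  · rw [eq_inv_iff_mul_eq_one (by rwa [constantCoeff_rescale]), ← map_mul,
      PowerSeries.inv_mul_cancel _ hg, map_one]

theorem coeff_two_mul_add_one_eq_zero_of_rescale_neg_one {K : Type*} [Field K] [CharZero K]
    {f : K⟦X⟧} (hf : rescale (-1) f = f) (j : ℕ) : coeff (2 * j + 1) f = 0 := by
  have h := congrArg (coeff (2 * j + 1)) hf
  rw [coeff_rescale, Odd.neg_one_pow ⟨j, rfl⟩, neg_one_mul, neg_eq_self] at h
  exact h

end PowerSeries

theorem Finset.sum_range_two_mul_add_one_of_odd_eq_zero {M : Type*} [AddCommMonoid M]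
    (G : ℕ → M) (hG : ∀ j, G (2 * j + 1) = 0) (k : ℕ) :
    ∑ i ∈ range (2 * k + 1), G i = ∑ p ∈ range (k + 1), G (2 * p) := by
  induction k with
  | zero => simp
  | succ k ih =>
    rw [show 2 * (k + 1) + 1 = 2 * k + 1 + 1 + 1 by ring, sum_range_succ, sum_range_succ, ih, hG,
      add_zero, sum_range_succ (fun p => G (2 * p)) (k + 1)]
    rfl

theorem constantCoeff_hS : constantCoeff hS = 1 := by
  simp [← coeff_zero_eq_constantCoeff_apply, hS]

theorem rescale_neg_one_hS : rescale (-1) hS = hS := by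
  ext m
  rw [coeff_rescale]
  rcases Nat.even_or_odd m with h | h
  · rw [h.neg_one_pow, one_mul]
  · simp [hS, Nat.odd_iff.mp h]

theorem coeff_rescale_two_hS (j : ℕ) : coeff (2 * j) (rescale 2 hS) = 4 ^ j / (2 * j + 1)! := by
  rw [coeff_rescale, pow_mul, hS, coeff_mk, if_pos (by omega)]
  norm_num [div_eq_mul_inv]

theorem two_mul_X_mul_hS : 2 * X * hS = exp ℚ - rescale (-1) (exp ℚ) := by
  ext m
  rcases m with _ | m
  · simp [constantCoeff_rescale]
  · rw [mul_assoc, ← map_ofNat C, coeff_C_mul, coeff_succ_X_mul, map_sub, coeff_rescale, coeff_exp,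
      Algebra.algebraMap_self, RingHom.id_apply]
    rcases Nat.even_or_odd m with h | h
    · rw [hS, coeff_mk, if_pos (Nat.even_iff.mp h), h.add_one.neg_one_pow]
      ring
    · rw [hS, coeff_mk, if_neg (by rw [Nat.odd_iff.mp h]; exact one_ne_zero), h.add_one.neg_one_pow]
      ring

theorem eulerOp_duplication_hS :
    eulerOp ℚ (rescale 2 hS) * hS - 2 * eulerOp ℚ hS * rescale 2 hS = hS * rescale 2 hS - hS := by
  have hEE : exp ℚ * rescale (-1) (exp ℚ) = 1 := exp_mul_exp_neg_eq_one
  have hE2 : rescale 2 (exp ℚ) = exp ℚ ^ 2 := by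
    rw [exp_pow_eq_rescale_exp]; norm_num
  have hE'2 : rescale 2 (rescale (-1) (exp ℚ)) = rescale (-1) (exp ℚ) ^ 2 := by
    rw [rescale_rescale, mul_comm, ← rescale_rescale, hE2, map_pow]
  have hθE' : eulerOp ℚ (rescale (-1) (exp ℚ)) = -(X * rescale (-1) (exp ℚ)) := by
    rw [eulerOp_rescale, eulerOp_exp, map_mul, rescale_neg_one_X, neg_mul]
  have hs := two_mul_X_mul_hS
  have hS4 : 4 * X * rescale 2 hS = exp ℚ ^ 2 - rescale (-1) (exp ℚ) ^ 2 := by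
    have := congrArg (rescale (2 : ℚ)) hs
    rw [map_sub, hE2, hE'2, map_mul, map_mul, rescale_X, map_ofNat, map_ofNat C] at this
    linear_combination this
  have hθs := congrArg (eulerOp ℚ) hs
  have hθS := congrArg (eulerOp ℚ) hS4
  simp only [sq, Derivation.leibniz, map_sub, eulerOp_X, eulerOp_exp, hθE', smul_eq_mul,
    (eulerOp ℚ).map_ofNat 2, (eulerOp ℚ).map_ofNat 4] at hθs hθS
  -- `2Xh = eˣ - e⁻ˣ` and `4XH = e²ˣ - e⁻²ˣ`: after multiplying by `8X²` the claim is a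
  -- polynomial identity in `X`, `eˣ`, `e⁻ˣ` modulo `eˣe⁻ˣ = 1`.
  have h8 : (8 * X ^ 2 : ℚ⟦X⟧) * (eulerOp ℚ (rescale 2 hS) * hS - 2 * eulerOp ℚ hS * rescale 2 hS
      - (hS * rescale 2 hS - hS)) = 0 := by
    linear_combination (2 * X * hS) * hθS - 2 * (4 * X * rescale 2 hS) * hθs
      + (2 * X * (exp ℚ ^ 2 + rescale (-1) (exp ℚ) ^ 2) + 4 * X) * hs
      - 2 * X * (exp ℚ + rescale (-1) (exp ℚ)) * hS4
      - 4 * X * (exp ℚ - rescale (-1) (exp ℚ)) * hEE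
  have h8X : (8 * X ^ 2 : ℚ⟦X⟧) ≠ 0 := by
    rw [← map_ofNat C]
    exact mul_ne_zero (by simp) (pow_ne_zero 2 X_ne_zero)
  exact sub_eq_zero.mp ((mul_eq_zero.mp h8).resolve_left h8X)

theorem eulerOp_duplication_hS_inv_pow (m : ℕ) :
    m * hS⁻¹ ^ m * eulerOp ℚ (rescale 2 hS) + 2 * eulerOp ℚ (hS⁻¹ ^ m) * rescale 2 hS
      - m * hS⁻¹ ^ m * rescale 2 hS + m * hS⁻¹ ^ m = 0 := by
  have hinv : hS⁻¹ * hS = 1 := PowerSeries.inv_mul_cancel _ (by simp [constantCoeff_hS])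
  rw [eulerOp_inv_pow]
  linear_combination (m * hS⁻¹ ^ m * hS⁻¹) * eulerOp_duplication_hS
    - m * hS⁻¹ ^ m * (eulerOp ℚ (rescale 2 hS) - rescale 2 hS + 1) * hinv

theorem coeff_two_mul_add_one_hS_inv_pow (m j : ℕ) : coeff (2 * j + 1) (hS⁻¹ ^ m) = 0 :=
  coeff_two_mul_add_one_eq_zero_of_rescale_neg_one
    (by rw [map_pow, rescale_inv, rescale_neg_one_hS]) j

theorem hS_inv_pow_coeff_recursion (m k : ℕ) :
    ∑ p ∈ Finset.range (k + 1), coeff (2 * p) (hS⁻¹ ^ m) * (4 ^ (k - p) / (2 * (k - p) + 1)!)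
      * (m * (2 * ((k - p : ℕ) : ℚ) - 1) + 4 * p) = -(m * coeff (2 * k) (hS⁻¹ ^ m)) := by
  have h := congrArg (coeff (2 * k)) (eulerOp_duplication_hS_inv_pow m)
  simp only [map_add, map_sub, map_zero, ← map_natCast C, ← map_ofNat C, mul_assoc, coeff_C_mul]
    at h
  simp only [coeff_mul, coeff_eulerOp, Finset.mul_sum, ← Finset.sum_add_distrib,
    ← Finset.sum_sub_distrib, Finset.Nat.sum_antidiagonal_eq_sum_range_succ_mk] at h
  rw [Finset.sum_range_two_mul_add_one_of_odd_eq_zero _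
    (by simp [coeff_two_mul_add_one_hS_inv_pow])] at h
  rw [← Finset.sum_congr rfl fun p hp => ?_] at h
  · linear_combination h
  have hpk : p ≤ k := Finset.mem_range_succ_iff.mp hp
  rw [show 2 * k - 2 * p = 2 * (k - p) by omega, coeff_rescale_two_hS]
  push_cast
  ring

theorem ccoef_zero (n : ℕ) : ccoef n 0 = 1 := by
  rw [ccoef, coeff_zero_eq_constantCoeff_apply, map_pow, constantCoeff_inv, constantCoeff_hS,
    inv_one, one_pow]

theorem ccoef_recursion (n k : ℕ) :
    ∑ p ∈ Finset.range k, ccoef n (2 * p) * (4 ^ (k - p) / (2 * (k - p) + 1)!)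
      * ((2 * n + 1) * (2 * ((k - p : ℕ) : ℚ) - 1) + 4 * p) = -(4 * k * ccoef n (2 * k)) := by
  have h := hS_inv_pow_coeff_recursion (2 * n + 1) k
  rw [Finset.sum_range_succ, Nat.sub_self] at h
  push_cast at h
  unfold ccoef
  linear_combination h

theorem ycoef_term_eq_ccoef_term (n k p : ℕ) (hpk : p < k) :
    ycoef n p * ((((2 * k + 2)! : ℚ) / 4) / ((2 * p + 2)! * (2 * k - 2 * p + 1)!)) *
      ((2 * (k : ℚ) - 2 * p - 1) * (2 * n - 2 * p + 1) + 2 * p * (2 * k - 2 * p + 1)) =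
    (2 * k + 2)! / (4 ^ (k + 1) * (2 * n + 1)) *
      (ccoef n (2 * p) * (4 ^ (k - p) / (2 * (k - p) + 1)!)
        * ((2 * n + 1) * (2 * ((k - p : ℕ) : ℚ) - 1) + 4 * p)) := by
  obtain ⟨q, rfl⟩ : ∃ q, k = p + q := ⟨k - p, by omega⟩
  rw [ycoef, Nat.add_sub_cancel_left, show 2 * (p + q) - 2 * p + 1 = 2 * q + 1 by omega]
  push_cast
  field_simp
  ring

theorem stmt10_general (n : ℕ) :
    ycoef n 0 = 2/(2*(n:ℚ)+1) ∧
    ∀ k : ℕ, 1 ≤ k → (k:ℚ) * ycoef n k =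
      - ∑ p ∈ Finset.range k, ycoef n p *
          (((((2*k+2))! : ℚ)/4) / ((((2*p+2))! : ℚ) * (((2*k-2*p+1))! : ℚ))) *
          ((2*(k:ℚ)-2*(p:ℚ)-1) * (2*(n:ℚ)-2*(p:ℚ)+1) + 2*(p:ℚ) * (2*(k:ℚ)-2*(p:ℚ)+1)) := by
  refine ⟨?_, fun k _ => ?_⟩
  · rw [ycoef, ccoef_zero]
    norm_num [Nat.factorial]
  · rw [Finset.sum_congr rfl fun p hp => ycoef_term_eq_ccoef_term n k p (Finset.mem_range.mp hp),
      ← Finset.mul_sum, ccoef_recursion, ycoef, pow_succ]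
    field_simp

/-- `y₀ = 2/(2n+1)` and for `k ≥ 1`,
`k y_k = −Σ_{p=0}^{k−1} y_p ((2k+2)!/4)/((2p+2)!(2k−2p+1)!) ((2k−2p−1)(2n−2p+1) + 2p(2k−2p+1))`:
the same coefficients satisfy both recursion relations arising from the two reorderings. -/
theorem stmt10 (n : ℕ) (hn : 1 ≤ n) :
    ycoef n 0 = 2/(2*(n:ℚ)+1) ∧
    ∀ k : ℕ, 1 ≤ k → (k:ℚ) * ycoef n k =
      - ∑ p ∈ Finset.range k, ycoef n p *
          (((((2*k+2))! : ℚ)/4) / ((((2*p+2))! : ℚ) * (((2*k-2*p+1))! : ℚ))) *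
          ((2*(k:ℚ)-2*(p:ℚ)-1) * (2*(n:ℚ)-2*(p:ℚ)+1) + 2*(p:ℚ) * (2*(k:ℚ)-2*(p:ℚ)+1)) :=
  stmt10_general n

end
end

section
/- For every integer n ≥ 1, the coefficient of u^{2n} in the formal power series exp(u) · (u/sinh u)^{2n+1} ∈ ℚ⟦u⟧ is equal to 0. -/
/-!
Write `h = sinh u / u` and `c = cosh u`; then `u h' = c - h`, `c' = u h` and `c² = 1 + u² h²`.
Let `diagCoeff m` be the coefficient of `u^m` in `e^u h^(-m-1)`. Since the Euler operator `u d/du`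
multiplies the coefficient of `u^N` by `N`, expanding `u d/du (e^u h^(-N))` and
`u d/du (e^u c h^(-N-1))` with these relations and comparing the coefficients of `u^N` and
`u^(N+1)` respectively yields two linear relations between the `diagCoeff m` and the coefficients
of `u^m` in `e^u c h^(-m-1)`. Eliminating the latter gives
`(m+1)(m+2) diagCoeff (m+2) = -m(m+2) diagCoeff m`; the factor `m` kills `diagCoeff 2`, hence
every `diagCoeff (2k+2)`.
-/

open scoped BigOperators
open Nat

noncomputable section

namespace PowerSeries

variable {R : Type*}

theorem coeff_natCast_mul [Semiring R] (n m : ℕ) (f : R⟦X⟧) :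
    coeff m ((n : R⟦X⟧) * f) = n * coeff m f := by
  rw [← map_natCast C, coeff_C_mul]

theorem coeff_X_mul_derivative [CommSemiring R] (f : R⟦X⟧) (n : ℕ) :
    coeff n (X * d⁄dX R f) = n * coeff n f := by
  cases n with
  | zero => simp
  | succ n => rw [coeff_succ_X_mul, coeff_derivative, mul_comm, Nat.cast_succ]

theorem derivative_evalNegHom [CommRing R] (f : R⟦X⟧) :
    d⁄dX R (evalNegHom f) = -evalNegHom (d⁄dX R f) := by
  ext n
  simp [evalNegHom, coeff_derivative, coeff_rescale, pow_succ, mul_assoc]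

theorem evalNegHom_mk_of_odd_eq_zero [CommRing R] {f : ℕ → R} (hf : ∀ m, Odd m → f m = 0) :
    evalNegHom (mk f) = mk f := by
  ext m
  rw [evalNegHom, coeff_rescale, coeff_mk]
  rcases Nat.even_or_odd m with hm | hm
  · rw [hm.neg_one_pow, one_mul]
  · rw [hf m hm, mul_zero]

theorem derivative_inv_pow {K : Type*} [Field K] (f : K⟦X⟧) (n : ℕ) :
    d⁄dX K (f⁻¹ ^ n) = -n * f⁻¹ ^ (n + 1) * d⁄dX K f := by
  rw [derivative_pow, derivative_inv']
  cases n with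
  | zero => simp
  | succ n => rw [Nat.add_sub_cancel]; ring

end PowerSeries

open PowerSeries

def coshS : ℚ⟦X⟧ := mk fun m => if m % 2 = 0 then (1 : ℚ) / m ! else 0

theorem exp_eq_coshS_add : exp ℚ = coshS + X * hS := by
  ext m
  rw [map_add, coeff_exp, coshS, coeff_mk]
  cases m with
  | zero => simp
  | succ m =>
    rw [coeff_succ_X_mul, hS, coeff_mk]
    rcases Nat.even_or_odd m with hm | hm
    · simp [Nat.succ_mod_two_eq_one_iff.mpr (Nat.even_iff.mp hm), Nat.even_iff.mp hm]
    · simp [Nat.succ_mod_two_eq_zero_iff.mpr (Nat.odd_iff.mp hm), Nat.odd_iff.mp hm]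

theorem evalNegHom_exp_eq_coshS_sub : evalNegHom (exp ℚ) = coshS - X * hS := by
  have hcosh : evalNegHom coshS = coshS :=
    evalNegHom_mk_of_odd_eq_zero fun m hm => by simp [Nat.odd_iff.mp hm]
  have hh : evalNegHom hS = hS :=
    evalNegHom_mk_of_odd_eq_zero fun m hm => by simp [Nat.odd_iff.mp hm]
  rw [exp_eq_coshS_add, map_add, map_mul, hcosh, hh, evalNegHom_X, neg_mul, sub_eq_add_neg]

theorem coshS_sq : coshS ^ 2 = 1 + X ^ 2 * hS ^ 2 := by
  have h : exp ℚ * evalNegHom (exp ℚ) = 1 := exp_mul_exp_neg_eq_one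
  rw [evalNegHom_exp_eq_coshS_sub, exp_eq_coshS_add] at h
  linear_combination h

theorem derivative_coshS_add_derivative_X_mul_hS :
    d⁄dX ℚ coshS + d⁄dX ℚ (X * hS) = coshS + X * hS := by
  rw [← map_add, ← exp_eq_coshS_add, derivative_exp]

theorem derivative_coshS : d⁄dX ℚ coshS = X * hS := by
  have hneg : d⁄dX ℚ coshS - d⁄dX ℚ (X * hS) = -(coshS - X * hS) := by
    rw [← map_sub, ← evalNegHom_exp_eq_coshS_sub, derivative_evalNegHom, derivative_exp]
  have h2 : (2 : ℚ⟦X⟧) ≠ 0 := fun h => by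
    have := congrArg (constantCoeff (R := ℚ)) h
    rw [map_ofNat, map_zero] at this
    norm_num at this
  refine mul_left_cancel₀ h2 ?_
  linear_combination derivative_coshS_add_derivative_X_mul_hS + hneg

theorem X_mul_derivative_hS : X * d⁄dX ℚ hS = coshS - hS := by
  have h := derivative_coshS_add_derivative_X_mul_hS
  rw [derivative_coshS, Derivation.leibniz, smul_eq_mul, smul_eq_mul, derivative_X] at h
  linear_combination h

theorem hS_mul_inv : hS * hS⁻¹ = 1 :=
  PowerSeries.mul_inv_cancel _ (by simp [hS])

theorem X_mul_derivative_exp_mul_hS_inv_pow (N : ℕ) :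
    X * d⁄dX ℚ (exp ℚ * hS⁻¹ ^ N) =
      X * (exp ℚ * hS⁻¹ ^ N) + (N : ℚ⟦X⟧) * (exp ℚ * hS⁻¹ ^ N)
        - (N : ℚ⟦X⟧) * (exp ℚ * coshS * hS⁻¹ ^ (N + 1)) := by
  rw [Derivation.leibniz, smul_eq_mul, smul_eq_mul, derivative_exp, derivative_inv_pow]
  linear_combination (-N * exp ℚ * hS⁻¹ ^ (N + 1)) * X_mul_derivative_hS
    + (N * exp ℚ * hS⁻¹ ^ N) * hS_mul_inv

theorem X_mul_derivative_exp_mul_coshS_mul_hS_inv_pow (N : ℕ) :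
    X * d⁄dX ℚ (exp ℚ * coshS * hS⁻¹ ^ (N + 1)) =
      X * (exp ℚ * coshS * hS⁻¹ ^ (N + 1))
        + ((N + 1 : ℕ) : ℚ⟦X⟧) * (exp ℚ * coshS * hS⁻¹ ^ (N + 1))
        - (N : ℚ⟦X⟧) * (X ^ 2 * (exp ℚ * hS⁻¹ ^ N))
        - ((N + 1 : ℕ) : ℚ⟦X⟧) * (exp ℚ * hS⁻¹ ^ (N + 2)) := by
  rw [Derivation.leibniz, smul_eq_mul, smul_eq_mul, Derivation.leibniz, smul_eq_mul, smul_eq_mul,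
    derivative_exp, derivative_coshS, derivative_inv_pow]
  push_cast
  linear_combination (-(N + 1) * exp ℚ * coshS * hS⁻¹ ^ (N + 2)) * X_mul_derivative_hS
    - ((N + 1) * exp ℚ * hS⁻¹ ^ (N + 2)) * coshS_sq
    + ((N + 1) * exp ℚ * coshS * hS⁻¹ ^ (N + 1)
      + X ^ 2 * exp ℚ * hS⁻¹ ^ N * (1 - (N + 1) * (hS * hS⁻¹ + 1))) * hS_mul_inv

def diagCoeff (m : ℕ) : ℚ := coeff m (exp ℚ * hS⁻¹ ^ (m + 1))

def diagCoeffCosh (m : ℕ) : ℚ := coeff m (exp ℚ * coshS * hS⁻¹ ^ (m + 1))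

theorem diagCoeff_eq_mul_diagCoeffCosh (m : ℕ) :
    diagCoeff m = (m + 1) * diagCoeffCosh (m + 1) := by
  have h := congrArg (coeff (m + 1)) (X_mul_derivative_exp_mul_hS_inv_pow (m + 1))
  rw [coeff_X_mul_derivative, map_sub, map_add, coeff_succ_X_mul, coeff_natCast_mul,
    coeff_natCast_mul] at h
  push_cast at h
  rw [diagCoeff, diagCoeffCosh]
  linear_combination -h

theorem diagCoeffCosh_succ (m : ℕ) :
    diagCoeffCosh (m + 1) = (m + 1) * diagCoeff m + (m + 2) * diagCoeff (m + 2) := by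
  have h := congrArg (coeff (m + 2))
    (X_mul_derivative_exp_mul_coshS_mul_hS_inv_pow (m + 1))
  rw [coeff_X_mul_derivative, map_sub, map_sub, map_add, coeff_succ_X_mul, coeff_natCast_mul,
    coeff_natCast_mul, coeff_natCast_mul, coeff_X_pow_mul, show m + 1 + 2 = m + 2 + 1 from rfl] at h
  push_cast at h
  rw [diagCoeff, diagCoeff, diagCoeffCosh]
  linear_combination -h

theorem diagCoeff_add_two (m : ℕ) :
    (m + 1) * (m + 2) * diagCoeff (m + 2) = -(m * (m + 2) * diagCoeff m) := by
  linear_combination -diagCoeff_eq_mul_diagCoeffCosh m - (m + 1) * diagCoeffCosh_succ m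

theorem diagCoeff_two_mul_add_two (k : ℕ) : diagCoeff (2 * k + 2) = 0 := by
  induction k with
  | zero => simpa using diagCoeff_add_two 0
  | succ k ih =>
    have h := diagCoeff_add_two (2 * k + 2)
    rw [ih, mul_zero, neg_zero] at h
    exact (mul_eq_zero.mp h).resolve_left (by positivity)

/-- The coefficient of `u^{2n}` in `exp(u)·(u/sinh u)^{2n+1}` vanishes. -/
theorem stmt12 (n : ℕ) (hn : 1 ≤ n) :
    PowerSeries.coeff (R := ℚ) (2*n) (PowerSeries.exp ℚ * (hS⁻¹)^(2*n+1)) = 0 := by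
  obtain ⟨k, rfl⟩ := Nat.exists_eq_add_of_le' hn
  exact diagCoeff_two_mul_add_two k

end
end
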